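/- arXiv:1608.06700 — 5 statements merged into one kernel-verified Lean document; each statement's English description precedes it below -/
import Mathlib

section
/- Hyperbolicity in time: for every θ ∈ ℝ, the matrix A(θ) := A₁·cosθ + A₂·sinθ admits the real diagonalization A(θ) = R(θ) · diag(v_θ − c·K_θ, v_θ, v_θ + c·K_θ) · L(θ), where v_θ = u·cosθ + v·sinθ. -/
open Real Matrix

noncomputable def swK (g11 g12 g22 θ : ℝ) : ℝ :=
  Real.sqrt (g11 * Real.cos θ ^ 2 + 2 * g12 * Real.sin θ * Real.cos θ + g22 * Real.sin θ ^ 2)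

noncomputable def swC (g h : ℝ) : ℝ := Real.sqrt (g * h)

noncomputable def swGc (g11 g12 g22 θ : ℝ) : ℝ :=
  (g11 * Real.cos θ + g12 * Real.sin θ) / swK g11 g12 g22 θ

noncomputable def swGs (g11 g12 g22 θ : ℝ) : ℝ :=
  (g12 * Real.cos θ + g22 * Real.sin θ) / swK g11 g12 g22 θ

noncomputable def swL (g h g11 g12 g22 θ : ℝ) : Matrix (Fin 3) (Fin 3) ℝ :=
  !![-(1/2), swC g h * Real.cos θ / (2 * g * swK g11 g12 g22 θ),
        swC g h * Real.sin θ / (2 * g * swK g11 g12 g22 θ);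
     0, swGs g11 g12 g22 θ / swK g11 g12 g22 θ, -(swGc g11 g12 g22 θ / swK g11 g12 g22 θ);
     1/2, swC g h * Real.cos θ / (2 * g * swK g11 g12 g22 θ),
        swC g h * Real.sin θ / (2 * g * swK g11 g12 g22 θ)]

noncomputable def swR (g h g11 g12 g22 θ : ℝ) : Matrix (Fin 3) (Fin 3) ℝ :=
  !![-1, 0, 1;
     (g / swC g h) * swGc g11 g12 g22 θ, Real.sin θ, (g / swC g h) * swGc g11 g12 g22 θ;
     (g / swC g h) * swGs g11 g12 g22 θ, -Real.cos θ, (g / swC g h) * swGs g11 g12 g22 θ]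


noncomputable def swA1 (g h u g11 g12 : ℝ) : Matrix (Fin 3) (Fin 3) ℝ :=
  !![u, h, 0; g * g11, u, 0; g * g12, 0, u]

noncomputable def swA2 (g h v g12 g22 : ℝ) : Matrix (Fin 3) (Fin 3) ℝ :=
  !![v, 0, h; g * g12, v, 0; g * g22, 0, v]

/-! `K_θ² = Q(cos θ, sin θ)` for the positive definite form `Q = g¹¹x² + 2g¹²xy + g²²y²`, so
`K_θ > 0`. The columns of `R(θ)` are eigenvectors of `A(θ)`: `(0, sin θ, -cos θ)` for `v_θ`, and
`(∓1, g G_c / c, g G_s / c)` for `v_θ ∓ c K_θ`, since `cos θ · G_c + sin θ · G_s = K_θ` and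
`c² = g h`. Moreover `L(θ)` is a right inverse of `R(θ)`, hence `A = A R L = R D L`. -/

variable {g h u v g11 g12 g22 : ℝ}

theorem quadratic_form_pos_of_ne_zero (h11 : 0 < g11) (hdet : 0 < g11 * g22 - g12 ^ 2)
    {a b : ℝ} (hab : a ≠ 0 ∨ b ≠ 0) : 0 < g11 * a ^ 2 + 2 * g12 * b * a + g22 * b ^ 2 := by
  have key : g11 * (g11 * a ^ 2 + 2 * g12 * b * a + g22 * b ^ 2) =
      (g11 * a + g12 * b) ^ 2 + (g11 * g22 - g12 ^ 2) * b ^ 2 := by ring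
  refine pos_of_mul_pos_right ?_ h11.le
  rw [key]
  rcases eq_or_ne b 0 with rfl | hb
  · have ha : a ≠ 0 := by simpa using hab
    simp only [mul_zero, add_zero, zero_pow two_ne_zero]
    positivity
  · have := mul_pos hdet (by positivity : (0 : ℝ) < b ^ 2)
    positivity

theorem swK_pos (h11 : 0 < g11) (hdet : 0 < g11 * g22 - g12 ^ 2) (θ : ℝ) :
    0 < swK g11 g12 g22 θ := by
  refine Real.sqrt_pos.2 (quadratic_form_pos_of_ne_zero h11 hdet ?_)
  by_contra! hcs
  simpa [hcs.1, hcs.2] using Real.sin_sq_add_cos_sq θ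

theorem swK_sq (h11 : 0 < g11) (hdet : 0 < g11 * g22 - g12 ^ 2) (θ : ℝ) :
    swK g11 g12 g22 θ ^ 2 =
      g11 * Real.cos θ ^ 2 + 2 * g12 * Real.sin θ * Real.cos θ + g22 * Real.sin θ ^ 2 :=
  Real.sq_sqrt (Real.sqrt_pos.1 (swK_pos h11 hdet θ)).le

theorem swC_pos (hg : 0 < g) (hh : 0 < h) : 0 < swC g h := Real.sqrt_pos.2 (mul_pos hg hh)

theorem swC_sq (hg : 0 < g) (hh : 0 < h) : swC g h ^ 2 = g * h :=
  Real.sq_sqrt (mul_pos hg hh).le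

theorem swR_mul_swL (hg : 0 < g) (hh : 0 < h) (h11 : 0 < g11) (hdet : 0 < g11 * g22 - g12 ^ 2)
    (θ : ℝ) : swR g h g11 g12 g22 θ * swL g h g11 g12 g22 θ = 1 := by
  have hK := swK_sq h11 hdet θ
  have hK0 := (swK_pos h11 hdet θ).ne'
  have hc0 := (swC_pos hg hh).ne'
  simp only [swR, swL, swGc, swGs, mul_fin_three, one_fin_three]
  generalize swK g11 g12 g22 θ = K at *
  generalize swC g h = c at *
  simp only [EmbeddingLike.apply_eq_iff_eq, vecCons_inj, and_true]
  refine ⟨⟨?_, ?_, ?_⟩, ⟨?_, ?_, ?_⟩, ⟨?_, ?_, ?_⟩⟩ <;> field_simp <;> grind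

theorem swA_mul_swR (hg : 0 < g) (hh : 0 < h) (h11 : 0 < g11) (hdet : 0 < g11 * g22 - g12 ^ 2)
    (θ : ℝ) :
    (Real.cos θ • swA1 g h u g11 g12 + Real.sin θ • swA2 g h v g12 g22) * swR g h g11 g12 g22 θ =
      swR g h g11 g12 g22 θ *
        Matrix.diagonal
          ![u * Real.cos θ + v * Real.sin θ - swC g h * swK g11 g12 g22 θ,
            u * Real.cos θ + v * Real.sin θ,
            u * Real.cos θ + v * Real.sin θ + swC g h * swK g11 g12 g22 θ] := by
  have hK := swK_sq h11 hdet θ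
  have hK0 := (swK_pos h11 hdet θ).ne'
  have hc := swC_sq hg hh
  have hc0 := (swC_pos hg hh).ne'
  simp only [swA1, swA2, swR, swGc, swGs, smul_of, of_add_of, smul_cons, smul_eq_mul, smul_empty,
    cons_add_cons, empty_add_empty, diagonal_fin_three, mul_fin_three, cons_val_zero, cons_val_one,
    cons_val_two, tail_cons, head_cons]
  generalize swK g11 g12 g22 θ = K at *
  generalize swC g h = c at *
  simp only [EmbeddingLike.apply_eq_iff_eq, vecCons_inj, and_true]
  refine ⟨⟨?_, ?_, ?_⟩, ⟨?_, ?_, ?_⟩, ⟨?_, ?_, ?_⟩⟩ <;> field_simp <;> grind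

/-- Hyperbolicity in time: real diagonalization of
`A(θ) = A₁ cosθ + A₂ sinθ` as `R(θ) · diag(v_θ − cK_θ, v_θ, v_θ + cK_θ) · L(θ)`. -/
theorem hyperbolicity_in_time
    (g h u v g11 g12 g22 : ℝ) (hg : 0 < g) (hh : 0 < h)
    (h11 : 0 < g11) (hdet : 0 < g11 * g22 - g12 ^ 2) :
    ∀ θ : ℝ,
      Real.cos θ • swA1 g h u g11 g12 + Real.sin θ • swA2 g h v g12 g22 =
        swR g h g11 g12 g22 θ *
          Matrix.diagonal
            ![u * Real.cos θ + v * Real.sin θ - swC g h * swK g11 g12 g22 θ,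
              u * Real.cos θ + v * Real.sin θ,
              u * Real.cos θ + v * Real.sin θ + swC g h * swK g11 g12 g22 θ] *
          swL g h g11 g12 g22 θ := by
  intro θ
  rw [← swA_mul_swR hg hh h11 hdet, Matrix.mul_assoc, swR_mul_swL hg hh h11 hdet, Matrix.mul_one]
end

section
/- Equality of the two acoustic-wave contributions: ∫₀^{2π} R^{(1)}(θ) · w₁(Q₁(θ); θ) dθ = ∫₀^{2π} R^{(3)}(θ) · w₃(Q₃(θ); θ) dθ as vectors in ℝ³, where R^{(1)}(θ) = (−1, (g/c)·G_c(θ), (g/c)·G_s(θ)) and R^{(3)}(θ) = (1, (g/c)·G_c(θ), (g/c)·G_s(θ)). -/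
open Real Matrix

/-! The substitution `θ ↦ θ + π` reverses the direction `(cos θ, sin θ)`: it leaves `K_θ`
unchanged and flips the signs of `G_c`, `G_s` and `ū cos θ + v̄ sin θ`. Hence it maps `Q₃` onto
`Q₁`, `w₃(Q₃(θ + π); θ + π)` onto `-w₁(Q₁(θ); θ)` and `R⁽³⁾(θ + π)` onto `-R⁽¹⁾(θ)`, so the two
integrands are translates of each other by `π`, and a translate of a `2π`-periodic function has
the same integral over a period. -/

theorem Function.Periodic.intervalIntegral_comp_add_right {E : Type*} [NormedAddCommGroup E]
    [NormedSpace ℝ E] {f : ℝ → E} {T : ℝ} (hf : Function.Periodic f T) (a : ℝ) :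
    ∫ x in (0 : ℝ)..T, f (x + a) = ∫ x in (0 : ℝ)..T, f x := by
  rw [intervalIntegral.integral_comp_add_right, zero_add, add_comm T,
    hf.intervalIntegral_add_eq a 0, zero_add]

section

variable (g11 g12 g22 : ℝ)

theorem swK_periodic : Function.Periodic (swK g11 g12 g22) π := by
  intro θ
  rw [swK, swK, cos_add_pi, sin_add_pi]
  ring_nf

theorem swGc_antiperiodic : Function.Antiperiodic (swGc g11 g12 g22) π := by
  intro θ
  rw [swGc, swGc, swK_periodic, cos_add_pi, sin_add_pi, ← neg_div]
  ring_nf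

theorem swGs_antiperiodic : Function.Antiperiodic (swGs g11 g12 g22) π := by
  intro θ
  rw [swGs, swGs, swK_periodic, cos_add_pi, sin_add_pi, ← neg_div]
  ring_nf

theorem swK_periodic_two_pi : Function.Periodic (swK g11 g12 g22) (2 * π) :=
  two_mul π ▸ (swK_periodic g11 g12 g22).add_period (swK_periodic g11 g12 g22)

end

theorem acoustic_contributions_eq_general
    (g h u v g11 g12 g22 x0 y0 τ : ℝ)
    (hb ub vb : ℝ × ℝ → ℝ) :
    let c := swC g h
    let Q1 : ℝ → ℝ × ℝ := fun θ =>
      (x0 - (u - c * swGc g11 g12 g22 θ) * τ, y0 - (v - c * swGs g11 g12 g22 θ) * τ)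
    let Q3 : ℝ → ℝ × ℝ := fun θ =>
      (x0 - (u + c * swGc g11 g12 g22 θ) * τ, y0 - (v + c * swGs g11 g12 g22 θ) * τ)
    let w1 : ℝ × ℝ → ℝ → ℝ := fun p θ =>
      -hb p / 2 + (c / (2 * g * swK g11 g12 g22 θ)) *
        (ub p * Real.cos θ + vb p * Real.sin θ)
    let w3 : ℝ × ℝ → ℝ → ℝ := fun p θ =>
      hb p / 2 + (c / (2 * g * swK g11 g12 g22 θ)) *
        (ub p * Real.cos θ + vb p * Real.sin θ)
    let R1 : ℝ → Fin 3 → ℝ := fun θ =>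
      ![(-1 : ℝ), (g / c) * swGc g11 g12 g22 θ, (g / c) * swGs g11 g12 g22 θ]
    let R3 : ℝ → Fin 3 → ℝ := fun θ =>
      ![(1 : ℝ), (g / c) * swGc g11 g12 g22 θ, (g / c) * swGs g11 g12 g22 θ]
    (∫ θ in (0:ℝ)..(2 * π), w1 (Q1 θ) θ • R1 θ) =
      ∫ θ in (0:ℝ)..(2 * π), w3 (Q3 θ) θ • R3 θ := by
  intro c Q1 Q3 w1 w3 R1 R3
  set F3 : ℝ → Fin 3 → ℝ := fun θ => w3 (Q3 θ) θ • R3 θ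
  have hQ : ∀ θ, Q3 (θ + π) = Q1 θ := fun θ => by
    simp only [Q1, Q3, swGc_antiperiodic _ _ _ θ, swGs_antiperiodic _ _ _ θ, Prod.mk.injEq]
    constructor <;> ring
  have h_shift : ∀ θ, w1 (Q1 θ) θ • R1 θ = F3 (θ + π) := fun θ => by
    simp only [F3, hQ θ]
    funext i
    fin_cases i <;>
      simp only [Fin.zero_eta, Fin.mk_one, Fin.reduceFinMk, Fin.isValue, Pi.smul_apply, cons_val,
        cons_val_zero, cons_val_one, smul_eq_mul, w1, w3, R1, R3, swK_periodic _ _ _ θ,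
        swGc_antiperiodic _ _ _ θ, swGs_antiperiodic _ _ _ θ, cos_add_pi, sin_add_pi] <;>
      ring
  have h_periodic : Function.Periodic F3 (2 * π) := fun θ => by
    simp only [F3, Q3, w3, R3, swK_periodic_two_pi g11 g12 g22 θ,
      (swGc_antiperiodic g11 g12 g22).periodic_two_mul θ,
      (swGs_antiperiodic g11 g12 g22).periodic_two_mul θ, cos_periodic θ, sin_periodic θ]
  simp only [h_shift]
  exact h_periodic.intervalIntegral_comp_add_right π

/-- Equality of the two acoustic-wave contributions:
`∫₀^{2π} R⁽¹⁾(θ) w₁(Q₁(θ);θ) dθ = ∫₀^{2π} R⁽³⁾(θ) w₃(Q₃(θ);θ) dθ` in ℝ³. -/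
theorem acoustic_contributions_eq
    (g h u v g11 g12 g22 x0 y0 τ : ℝ) (hg : 0 < g) (hh : 0 < h)
    (h11 : 0 < g11) (hdet : 0 < g11 * g22 - g12 ^ 2) (hτ : 0 < τ)
    (hb ub vb : ℝ × ℝ → ℝ)
    (hhb : Continuous hb) (hub : Continuous ub) (hvb : Continuous vb) :
    let c := swC g h
    let Q1 : ℝ → ℝ × ℝ := fun θ =>
      (x0 - (u - c * swGc g11 g12 g22 θ) * τ, y0 - (v - c * swGs g11 g12 g22 θ) * τ)
    let Q3 : ℝ → ℝ × ℝ := fun θ =>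
      (x0 - (u + c * swGc g11 g12 g22 θ) * τ, y0 - (v + c * swGs g11 g12 g22 θ) * τ)
    let w1 : ℝ × ℝ → ℝ → ℝ := fun p θ =>
      -hb p / 2 + (c / (2 * g * swK g11 g12 g22 θ)) *
        (ub p * Real.cos θ + vb p * Real.sin θ)
    let w3 : ℝ × ℝ → ℝ → ℝ := fun p θ =>
      hb p / 2 + (c / (2 * g * swK g11 g12 g22 θ)) *
        (ub p * Real.cos θ + vb p * Real.sin θ)
    let R1 : ℝ → Fin 3 → ℝ := fun θ =>
      ![(-1 : ℝ), (g / c) * swGc g11 g12 g22 θ, (g / c) * swGs g11 g12 g22 θ]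
    let R3 : ℝ → Fin 3 → ℝ := fun θ =>
      ![(1 : ℝ), (g / c) * swGc g11 g12 g22 θ, (g / c) * swGs g11 g12 g22 θ]
    (∫ θ in (0:ℝ)..(2 * π), w1 (Q1 θ) θ • R1 θ) =
      ∫ θ in (0:ℝ)..(2 * π), w3 (Q3 θ) θ • R3 θ :=
  acoustic_contributions_eq_general g h u v g11 g12 g22 x0 y0 τ hb ub vb
end

section
/- Evaluation of J₁ (formula (j1)): if H := (g¹¹)² + (g²²)² − 2g¹¹g²² + 4(g¹²)² > 0, then (1/(2π)) · ∫₀^{2π} sinθ·cosθ / K_θ² dθ = (g¹²/H) · (2 − (g¹¹ + g²²)·Λ), where Λ = (g¹¹g²² − (g¹²)²)^{−1/2}. -/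
/-!
Write `K θ = a cos² θ + 2b sin θ cos θ + c sin² θ` and `Q θ = K' θ / 2`. On the unit circle
`H sin θ cos θ = (c - a) Q + 2b K - b (a + c)`, so the integral splits into `∫ Q / K`, which is
`[log K / 2]` over a period and hence `0`, a constant, and `∫ 1 / K = 2π / √(ac - b²)`.
-/

open Real intervalIntegral

noncomputable section

def trigQuadForm (a b c θ : ℝ) : ℝ := a * cos θ ^ 2 + 2 * b * sin θ * cos θ + c * sin θ ^ 2

def trigQuadFormCross (a b c θ : ℝ) : ℝ := b * (cos θ ^ 2 - sin θ ^ 2) + (c - a) * sin θ * cos θ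

/-- The polar angle of `(G + √(det G)) u` for `G = !![a, b; b, c]` and `u = (cos θ, sin θ)`:
the arctan term is the angle from `u`, with tangent `(u × G u) / (u ⬝ G u + √(det G))`. As
`G + √(det G)` is positive definite, that angle stays in `(-π/2, π/2)`, so no branch of arctan
jumps and this is a global antiderivative of `√(det G) / K`. -/
def trigQuadFormPhase (a b c θ : ℝ) : ℝ :=
  θ + arctan (trigQuadFormCross a b c θ / (trigQuadForm a b c θ + √(a * c - b ^ 2)))

end

@[fun_prop]
theorem continuous_trigQuadForm (a b c : ℝ) : Continuous (trigQuadForm a b c) := by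
  unfold trigQuadForm
  fun_prop

@[fun_prop]
theorem continuous_trigQuadFormCross (a b c : ℝ) : Continuous (trigQuadFormCross a b c) := by
  unfold trigQuadFormCross
  fun_prop

theorem hasDerivAt_trigQuadForm (a b c θ : ℝ) :
    HasDerivAt (trigQuadForm a b c) (2 * trigQuadFormCross a b c θ) θ := by
  have hs := hasDerivAt_sin θ
  have hc := hasDerivAt_cos θ
  refine ((((hc.pow 2).const_mul a).add ((hs.const_mul (2 * b)).mul hc)).add
    ((hs.pow 2).const_mul c)).congr_deriv ?_
  norm_num [trigQuadFormCross]
  ring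

theorem hasDerivAt_trigQuadFormCross (a b c θ : ℝ) :
    HasDerivAt (trigQuadFormCross a b c)
      ((c - a) * (cos θ ^ 2 - sin θ ^ 2) - 4 * b * sin θ * cos θ) θ := by
  have hs := hasDerivAt_sin θ
  have hc := hasDerivAt_cos θ
  refine (((hc.pow 2).sub (hs.pow 2)).const_mul b |>.add
    ((hs.const_mul (c - a)).mul hc)).congr_deriv ?_
  norm_num
  ring

theorem mul_sin_mul_cos_eq (a b c θ : ℝ) :
    (a ^ 2 + c ^ 2 - 2 * a * c + 4 * b ^ 2) * (sin θ * cos θ) =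
      (c - a) * trigQuadFormCross a b c θ + 2 * b * trigQuadForm a b c θ - b * (a + c) := by
  have := sin_sq_add_cos_sq θ
  unfold trigQuadForm trigQuadFormCross
  linear_combination (-b * (a + c)) * this

section

variable {a b c : ℝ}

theorem trigQuadForm_pos (ha : 0 < a) (hdet : 0 < a * c - b ^ 2) (θ : ℝ) :
    0 < trigQuadForm a b c θ := by
  have hc : 0 < c := by nlinarith [sq_nonneg b]
  unfold trigQuadForm
  nlinarith [sq_nonneg (a * cos θ + b * sin θ), sq_nonneg (b * cos θ + c * sin θ),
    sin_sq_add_cos_sq θ]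

theorem trigQuadFormCross_sq_add_sq {d : ℝ} (hd : d ^ 2 = a * c - b ^ 2) (θ : ℝ) :
    trigQuadFormCross a b c θ ^ 2 + (trigQuadForm a b c θ + d) ^ 2 =
      (a + c + 2 * d) * trigQuadForm a b c θ := by
  have := sin_sq_add_cos_sq θ
  unfold trigQuadForm trigQuadFormCross
  grind

theorem hasDerivAt_trigQuadFormPhase (ha : 0 < a) (hdet : 0 < a * c - b ^ 2) (θ : ℝ) :
    HasDerivAt (trigQuadFormPhase a b c) (√(a * c - b ^ 2) / trigQuadForm a b c θ) θ := by
  set d := √(a * c - b ^ 2)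
  have hd2 : d ^ 2 = a * c - b ^ 2 := sq_sqrt hdet.le
  have hK := trigQuadForm_pos ha hdet θ
  have hP : 0 < trigQuadForm a b c θ + d := by positivity
  refine ((hasDerivAt_id θ).add (((hasDerivAt_trigQuadFormCross a b c θ).fun_div
    ((hasDerivAt_trigQuadForm a b c θ).add_const d) hP.ne').arctan)).congr_deriv ?_
  have hnorm := trigQuadFormCross_sq_add_sq hd2 θ
  have hnum : ((c - a) * (cos θ ^ 2 - sin θ ^ 2) - 4 * b * sin θ * cos θ) *
      (trigQuadForm a b c θ + d) - 2 * trigQuadFormCross a b c θ ^ 2 =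
      (a + c + 2 * d) * (d - trigQuadForm a b c θ) := by
    have := sin_sq_add_cos_sq θ
    unfold trigQuadForm trigQuadFormCross
    grind
  field_simp
  linear_combination (trigQuadForm a b c θ - d) * hnorm + trigQuadForm a b c θ * hnum

theorem integral_inv_trigQuadForm (ha : 0 < a) (hdet : 0 < a * c - b ^ 2) :
    ∫ θ in (0)..(2 * π), (trigQuadForm a b c θ)⁻¹ = 2 * π / √(a * c - b ^ 2) := by
  have hK := trigQuadForm_pos ha hdet
  have hFTC := integral_eq_sub_of_hasDerivAt (a := 0) (b := 2 * π)
    (fun θ _ => hasDerivAt_trigQuadFormPhase ha hdet θ)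
    (Continuous.intervalIntegrable (by fun_prop (disch := exact fun θ => (hK θ).ne')) _ _)
  have hperiod : trigQuadFormPhase a b c (2 * π) - trigQuadFormPhase a b c 0 = 2 * π := by
    simp [trigQuadFormPhase, trigQuadForm, trigQuadFormCross]
  simp only [div_eq_mul_inv, integral_const_mul, hperiod] at hFTC
  rw [eq_div_iff (sqrt_pos.2 hdet).ne', mul_comm, hFTC]

theorem integral_trigQuadFormCross_div (ha : 0 < a) (hdet : 0 < a * c - b ^ 2) :
    ∫ θ in (0)..(2 * π), trigQuadFormCross a b c θ / trigQuadForm a b c θ = 0 := by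
  have hK := trigQuadForm_pos ha hdet
  have hderiv (θ : ℝ) : HasDerivAt (fun x => log (trigQuadForm a b c x) / 2)
      (trigQuadFormCross a b c θ / trigQuadForm a b c θ) θ :=
    (((hasDerivAt_trigQuadForm a b c θ).log (hK θ).ne').div_const 2).congr_deriv (by ring)
  rw [integral_eq_sub_of_hasDerivAt (fun θ _ => hderiv θ)
    (Continuous.intervalIntegrable (by fun_prop (disch := exact fun θ => (hK θ).ne')) _ _)]
  simp [trigQuadForm]

end

/-- Evaluation of `J₁` (formula (j1)). -/
theorem J1_eval (g11 g12 g22 : ℝ) (h11 : 0 < g11) (hdet : 0 < g11 * g22 - g12 ^ 2)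
    (hH : 0 < g11 ^ 2 + g22 ^ 2 - 2 * g11 * g22 + 4 * g12 ^ 2) :
    (1 / (2 * π)) *
      ∫ θ in (0:ℝ)..(2 * π),
        Real.sin θ * Real.cos θ /
          (g11 * Real.cos θ ^ 2 + 2 * g12 * Real.sin θ * Real.cos θ +
            g22 * Real.sin θ ^ 2)
    = (g12 / (g11 ^ 2 + g22 ^ 2 - 2 * g11 * g22 + 4 * g12 ^ 2)) *
        (2 - (g11 + g22) * (1 / Real.sqrt (g11 * g22 - g12 ^ 2))) := by
  set H := g11 ^ 2 + g22 ^ 2 - 2 * g11 * g22 + 4 * g12 ^ 2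
  have hK := trigQuadForm_pos h11 hdet
  have hsplit (θ : ℝ) : sin θ * cos θ / trigQuadForm g11 g12 g22 θ =
      ((g22 - g11) * (trigQuadFormCross g11 g12 g22 θ / trigQuadForm g11 g12 g22 θ) + 2 * g12
        - g12 * (g11 + g22) * (trigQuadForm g11 g12 g22 θ)⁻¹) / H := by
    have := mul_sin_mul_cos_eq g11 g12 g22 θ
    field_simp [(hK θ).ne']
    linear_combination this
  change _ * ∫ θ in (0:ℝ)..(2 * π), sin θ * cos θ / trigQuadForm g11 g12 g22 θ = _
  simp_rw [hsplit]
  rw [integral_div, integral_sub, integral_add, integral_const, integral_const_mul,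
    integral_const_mul, integral_trigQuadFormCross_div h11 hdet, integral_inv_trigQuadForm h11 hdet]
  · field_simp
    ring
  all_goals
    exact Continuous.intervalIntegrable (by fun_prop (disch := exact fun θ => (hK θ).ne')) _ _
end

section
/- Evaluation of J₂ (formula (j2)): if H := (g¹¹)² + (g²²)² − 2g¹¹g²² + 4(g¹²)² > 0, then (1/(2π)) · ∫₀^{2π} sin²θ / K_θ² dθ = (1/H) · ( ((g¹¹)² − g¹¹g²² + 2(g¹²)²)·Λ + g²² − g¹¹ ), where Λ = (g¹¹g²² − (g¹²)²)^{−1/2}. -/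
/-!
Write `K θ = a cos² θ + 2 b sin θ cos θ + c sin² θ` and `s = √(a c - b²)`. In the frame rotated by
`θ` the matrix `!![a, b; b, c]` has diagonal entries `K θ`, `K (θ + π / 2)` and off-diagonal entry
`N θ = K' θ / 2`, and its determinant `K θ K (θ + π / 2) - N θ ² = s²` is rotation invariant. This
identity makes `θ + arctan (N θ / (K θ + s))` a primitive of `s / K` without jumps, so
`∫₀^{2π} dθ / K = 2π / s`. The integrand then splits as
`((a - c)² + 4 b²) sin² θ / K = (c - a) + (a² - a c + 2 b²) / K - b K' / K`,
and `K' / K` integrates to zero over a period.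
-/

open Real

noncomputable section

variable (a b c : ℝ)

def quadForm (θ : ℝ) : ℝ :=
  a * cos θ ^ 2 + 2 * b * sin θ * cos θ + c * sin θ ^ 2

def quadFormOffDiag (θ : ℝ) : ℝ :=
  (c - a) * sin θ * cos θ + b * (cos θ ^ 2 - sin θ ^ 2)

lemma quadForm_add_pi_div_two (θ : ℝ) :
    quadForm a b c (θ + π / 2) = a * sin θ ^ 2 - 2 * b * sin θ * cos θ + c * cos θ ^ 2 := by
  simp only [quadForm, sin_add_pi_div_two, cos_add_pi_div_two]
  ring

lemma quadForm_mul_quadForm_add_pi_div_two_sub_sq (θ : ℝ) :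
    quadForm a b c θ * quadForm a b c (θ + π / 2) - quadFormOffDiag a b c θ ^ 2 =
      a * c - b ^ 2 := by
  rw [quadForm_add_pi_div_two, quadForm, quadFormOffDiag]
  linear_combination (a * c - b ^ 2) * (sin θ ^ 2 + cos θ ^ 2 + 1) * sin_sq_add_cos_sq θ

lemma discr_mul_sin_sq (θ : ℝ) :
    ((a - c) ^ 2 + 4 * b ^ 2) * sin θ ^ 2 =
      (c - a) * quadForm a b c θ + (a ^ 2 - a * c + 2 * b ^ 2) - b * (2 * quadFormOffDiag a b c θ) := by
  rw [quadForm, quadFormOffDiag]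
  linear_combination (a ^ 2 - a * c + 2 * b ^ 2) * sin_sq_add_cos_sq θ

@[fun_prop]
lemma continuous_quadForm : Continuous (quadForm a b c) := by
  unfold quadForm; fun_prop

@[fun_prop]
lemma continuous_quadFormOffDiag : Continuous (quadFormOffDiag a b c) := by
  unfold quadFormOffDiag; fun_prop

lemma hasDerivAt_quadForm (θ : ℝ) :
    HasDerivAt (quadForm a b c) (2 * quadFormOffDiag a b c θ) θ := by
  refine (((((hasDerivAt_cos θ).pow 2).const_mul a).add
    (((hasDerivAt_sin θ).const_mul (2 * b)).mul (hasDerivAt_cos θ))).add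
      (((hasDerivAt_sin θ).pow 2).const_mul c)).congr_deriv ?_
  rw [quadFormOffDiag]; ring

lemma hasDerivAt_quadFormOffDiag (θ : ℝ) :
    HasDerivAt (quadFormOffDiag a b c) (quadForm a b c (θ + π / 2) - quadForm a b c θ) θ := by
  refine ((((hasDerivAt_sin θ).const_mul (c - a)).mul (hasDerivAt_cos θ)).add
    ((((hasDerivAt_cos θ).pow 2).sub ((hasDerivAt_sin θ).pow 2)).const_mul b)).congr_deriv ?_
  rw [quadForm_add_pi_div_two, quadForm]; ring

/-- Unlike the textbook primitive `arctan ((c * tan θ + b) / √(a * c - b ^ 2))`, this one is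
continuous on all of `ℝ`. -/
def quadFormAngle (θ : ℝ) : ℝ :=
  θ + arctan (quadFormOffDiag a b c θ / (quadForm a b c θ + √(a * c - b ^ 2)))

lemma quadFormAngle_two_pi : quadFormAngle a b c (2 * π) = quadFormAngle a b c 0 + 2 * π := by
  simp only [quadFormAngle, quadForm, quadFormOffDiag, sin_two_pi, cos_two_pi, sin_zero, cos_zero]
  ring

lemma one_add_arctan_deriv_eq {K L N s : ℝ} (hK : 0 < K) (hs : 0 < s)
    (hdet : K * L - N ^ 2 = s ^ 2) :
    1 + 1 / (1 + (N / (K + s)) ^ 2) * (((L - K) * (K + s) - N * (2 * N)) / (K + s) ^ 2) =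
      s / K := by
  have hKs : K + s ≠ 0 := by positivity
  field_simp
  linear_combination (K + s) * hdet

variable {a b c}

lemma quadForm_pos (ha : 0 < a) (hdet : 0 < a * c - b ^ 2) (θ : ℝ) : 0 < quadForm a b c θ := by
  have hsq : a * quadForm a b c θ = (a * cos θ + b * sin θ) ^ 2 + (a * c - b ^ 2) * sin θ ^ 2 := by
    rw [quadForm]; ring
  rcases eq_or_ne (sin θ) 0 with hsin | hsin
  · have hcos : cos θ ^ 2 = 1 := by simpa [hsin] using sin_sq_add_cos_sq θ
    simp [quadForm, hsin, hcos, ha]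
  · have : 0 < a * quadForm a b c θ := by rw [hsq]; positivity
    exact pos_of_mul_pos_right this ha.le

lemma hasDerivAt_quadFormAngle (ha : 0 < a) (hdet : 0 < a * c - b ^ 2) (θ : ℝ) :
    HasDerivAt (quadFormAngle a b c) (√(a * c - b ^ 2) / quadForm a b c θ) θ := by
  have hs : 0 < √(a * c - b ^ 2) := sqrt_pos.2 hdet
  have hK := quadForm_pos ha hdet θ
  have hN := (hasDerivAt_quadFormOffDiag a b c θ).div
    ((hasDerivAt_quadForm a b c θ).add_const √(a * c - b ^ 2)) (by positivity)
  refine ((hasDerivAt_id θ).add hN.arctan).congr_deriv (one_add_arctan_deriv_eq hK hs ?_)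
  rw [sq_sqrt hdet.le, quadForm_mul_quadForm_add_pi_div_two_sub_sq]

lemma integral_sqrt_div_quadForm (ha : 0 < a) (hdet : 0 < a * c - b ^ 2) :
    ∫ θ in (0)..(2 * π), √(a * c - b ^ 2) / quadForm a b c θ = 2 * π := by
  have hK θ : quadForm a b c θ ≠ 0 := (quadForm_pos ha hdet θ).ne'
  rw [intervalIntegral.integral_eq_sub_of_hasDerivAt
    (fun θ _ => hasDerivAt_quadFormAngle ha hdet θ), quadFormAngle_two_pi]
  · ring
  · exact Continuous.intervalIntegrable (by fun_prop (disch := exact hK)) _ _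

lemma integral_logDeriv_quadForm (ha : 0 < a) (hdet : 0 < a * c - b ^ 2) :
    ∫ θ in (0)..(2 * π), 2 * quadFormOffDiag a b c θ / quadForm a b c θ = 0 := by
  have hK θ : quadForm a b c θ ≠ 0 := (quadForm_pos ha hdet θ).ne'
  rw [intervalIntegral.integral_eq_sub_of_hasDerivAt
    (fun θ _ => (hasDerivAt_quadForm a b c θ).log (hK θ))]
  · simp only [quadForm, sin_two_pi, cos_two_pi, sin_zero, cos_zero, sub_self]
  · exact Continuous.intervalIntegrable (by fun_prop (disch := exact hK)) _ _

end

/-- Evaluation of `J₂` (formula (j2)). -/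
theorem J2_eval (g11 g12 g22 : ℝ) (h11 : 0 < g11) (hdet : 0 < g11 * g22 - g12 ^ 2)
    (hH : 0 < g11 ^ 2 + g22 ^ 2 - 2 * g11 * g22 + 4 * g12 ^ 2) :
    (1 / (2 * π)) *
      ∫ θ in (0:ℝ)..(2 * π),
        Real.sin θ ^ 2 /
          (g11 * Real.cos θ ^ 2 + 2 * g12 * Real.sin θ * Real.cos θ +
            g22 * Real.sin θ ^ 2)
    = (1 / (g11 ^ 2 + g22 ^ 2 - 2 * g11 * g22 + 4 * g12 ^ 2)) *
        ((g11 ^ 2 - g11 * g22 + 2 * g12 ^ 2) * (1 / Real.sqrt (g11 * g22 - g12 ^ 2)) +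
          g22 - g11) := by
  set H := g11 ^ 2 + g22 ^ 2 - 2 * g11 * g22 + 4 * g12 ^ 2
  set s := √(g11 * g22 - g12 ^ 2)
  have hs : s ≠ 0 := (sqrt_pos.2 hdet).ne'
  have hH0 : H ≠ 0 := hH.ne'
  have hK θ : quadForm g11 g12 g22 θ ≠ 0 := (quadForm_pos h11 hdet θ).ne'
  have hsplit θ : sin θ ^ 2 / quadForm g11 g12 g22 θ =
      (g22 - g11) / H + (g11 ^ 2 - g11 * g22 + 2 * g12 ^ 2) / (H * s) * (s / quadForm g11 g12 g22 θ)
        - g12 / H * (2 * quadFormOffDiag g11 g12 g22 θ / quadForm g11 g12 g22 θ) := by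
    have := hK θ
    field_simp
    linear_combination discr_mul_sin_sq g11 g12 g22 θ
  change (1 / (2 * π)) * ∫ θ in (0)..(2 * π), sin θ ^ 2 / quadForm g11 g12 g22 θ = _
  simp_rw [hsplit]
  rw [intervalIntegral.integral_sub, intervalIntegral.integral_add, intervalIntegral.integral_const,
    intervalIntegral.integral_const_mul, intervalIntegral.integral_const_mul,
    integral_sqrt_div_quadForm h11 hdet, integral_logDeriv_quadForm h11 hdet, smul_eq_mul]
  · field_simp
    ring
  all_goals exact Continuous.intervalIntegrable (by fun_prop (disch := exact hK)) _ _
end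

section
/- Flux transformation identity underlying conservation across cubed-sphere edges (Theorem 3.2): let A be an invertible real 2×2 matrix with Λ := det A > 0, let G = Aᵀ·A with inverse G⁻¹ = [[g¹¹, g¹²], [g¹², g²²]], let h > 0, g > 0, u, v ∈ ℝ, and set (u_s, v_s)ᵀ = A·(u, v)ᵀ. Define the 3×2 flux matrix F = [[Λ·h·u, Λ·h·v], [Λ·(h·u² + ½g·g¹¹·h²), Λ·(h·u·v + ½g·g¹²·h²)], [Λ·(h·u·v + ½g·g¹²·h²), Λ·(h·v² + ½g·g²²·h²)]] and the block matrix B = [[1, 0, 0], [0, A₁₁, A₁₂], [0, A₂₁, A₂₂]]. Then B · F · Aᵀ = Λ · [[h·u_s, h·v_s], [h·u_s² + ½g·h², h·u_s·v_s], [h·u_s·v_s, h·v_s² + ½g·h²]]. -/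
open Matrix

/-!
Write `w = (u, v)` and `G⁻¹ = (Aᵀ A)⁻¹`. Up to the factor `Λ`, the first row of `B F Aᵀ` is
`h (A w)ᵀ` and its lower `2 × 2` block is `A (h w wᵀ + ½ g h² G⁻¹) Aᵀ = h (A w)(A w)ᵀ + ½ g h² A G⁻¹ Aᵀ`.
The pressure term collapses because `A (Aᵀ A)⁻¹ Aᵀ = 1` for invertible `A`.
-/

namespace Matrix

theorem mul_inv_transpose_mul_self_mul_transpose {n R : Type*} [Fintype n] [DecidableEq n]
    [CommRing R] (A : Matrix n n R) (hA : IsUnit A.det) : A * (Aᵀ * A)⁻¹ * Aᵀ = 1 := by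
  rw [mul_inv_rev, ← Matrix.mul_assoc, mul_nonsing_inv A hA, Matrix.one_mul,
    nonsing_inv_mul Aᵀ (by rwa [det_transpose])]

theorem mul_mul_transpose_apply_of_isSymm_fin_two {R : Type*} [CommRing R]
    (A S : Matrix (Fin 2) (Fin 2) R) (hS : S.IsSymm) (i j : Fin 2) :
    (A * S * Aᵀ) i j = A i 0 * A j 0 * S 0 0 + (A i 0 * A j 1 + A i 1 * A j 0) * S 0 1
      + A i 1 * A j 1 * S 1 1 := by
  have hS10 : S 1 0 = S 0 1 := hS.apply 0 1
  simp only [mul_apply, Fin.sum_univ_two, transpose_apply, hS10]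
  ring

theorem mul_inv_transpose_mul_self_mul_transpose_apply_fin_two {R : Type*} [CommRing R]
    (A : Matrix (Fin 2) (Fin 2) R) (hA : IsUnit A.det) (i j : Fin 2) :
    A i 0 * A j 0 * (Aᵀ * A)⁻¹ 0 0 + (A i 0 * A j 1 + A i 1 * A j 0) * (Aᵀ * A)⁻¹ 0 1
      + A i 1 * A j 1 * (Aᵀ * A)⁻¹ 1 1 = (1 : Matrix (Fin 2) (Fin 2) R) i j := by
  rw [← mul_mul_transpose_apply_of_isSymm_fin_two A _ (isSymm_transpose_mul_self A).inv,
    mul_inv_transpose_mul_self_mul_transpose A hA]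

end Matrix

theorem flux_transformation_general
    (A : Matrix (Fin 2) (Fin 2) ℝ) (hA : IsUnit A.det)
    (g h u v : ℝ) :
    let Λ := A.det
    let Ginv := (Aᵀ * A)⁻¹
    let g11 := Ginv 0 0
    let g12 := Ginv 0 1
    let g22 := Ginv 1 1
    let us := A 0 0 * u + A 0 1 * v
    let vs := A 1 0 * u + A 1 1 * v
    let F : Matrix (Fin 3) (Fin 2) ℝ :=
      !![Λ * (h * u), Λ * (h * v);
         Λ * (h * u ^ 2 + (1 / 2) * g * g11 * h ^ 2),
           Λ * (h * u * v + (1 / 2) * g * g12 * h ^ 2);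
         Λ * (h * u * v + (1 / 2) * g * g12 * h ^ 2),
           Λ * (h * v ^ 2 + (1 / 2) * g * g22 * h ^ 2)]
    let B : Matrix (Fin 3) (Fin 3) ℝ :=
      !![1, 0, 0; 0, A 0 0, A 0 1; 0, A 1 0, A 1 1]
    B * F * Aᵀ =
      Λ • !![h * us, h * vs;
             h * us ^ 2 + (1 / 2) * g * h ^ 2, h * us * vs;
             h * us * vs, h * vs ^ 2 + (1 / 2) * g * h ^ 2] := by
  intro Λ Ginv g11 g12 g22 us vs F B
  have hpressure := mul_inv_transpose_mul_self_mul_transpose_apply_fin_two A hA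
  simp only [Fin.forall_fin_two, one_apply_eq, one_apply_ne zero_ne_one,
    one_apply_ne one_ne_zero] at hpressure
  obtain ⟨⟨h00, h01⟩, h10, h11⟩ := hpressure
  ext i j
  fin_cases i <;> fin_cases j <;>
    simp only [B, F, us, vs, mul_apply, Fin.sum_univ_three, Fin.sum_univ_two, transpose_apply,
      Matrix.smul_apply, of_apply, cons_val_zero, cons_val_one, cons_val_two, head_cons,
      tail_cons, Fin.reduceFinMk]
  · ring
  · ring
  · linear_combination (Λ * (1 / 2 * g * h ^ 2)) * h00
  · linear_combination (Λ * (1 / 2 * g * h ^ 2)) * h01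
  · linear_combination (Λ * (1 / 2 * g * h ^ 2)) * h10
  · linear_combination (Λ * (1 / 2 * g * h ^ 2)) * h11

/-- Flux transformation identity underlying conservation across
cubed-sphere edges (Theorem 3.2). -/
theorem flux_transformation
    (A : Matrix (Fin 2) (Fin 2) ℝ) (hA : IsUnit A.det) (hΛ : 0 < A.det)
    (g h u v : ℝ) (hg : 0 < g) (hh : 0 < h) :
    let Λ := A.det
    let Ginv := (Aᵀ * A)⁻¹
    let g11 := Ginv 0 0
    let g12 := Ginv 0 1
    let g22 := Ginv 1 1
    let us := A 0 0 * u + A 0 1 * v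
    let vs := A 1 0 * u + A 1 1 * v
    let F : Matrix (Fin 3) (Fin 2) ℝ :=
      !![Λ * (h * u), Λ * (h * v);
         Λ * (h * u ^ 2 + (1 / 2) * g * g11 * h ^ 2),
           Λ * (h * u * v + (1 / 2) * g * g12 * h ^ 2);
         Λ * (h * u * v + (1 / 2) * g * g12 * h ^ 2),
           Λ * (h * v ^ 2 + (1 / 2) * g * g22 * h ^ 2)]
    let B : Matrix (Fin 3) (Fin 3) ℝ :=
      !![1, 0, 0; 0, A 0 0, A 0 1; 0, A 1 0, A 1 1]
    B * F * Aᵀ =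
      Λ • !![h * us, h * vs;
             h * us ^ 2 + (1 / 2) * g * h ^ 2, h * us * vs;
             h * us * vs, h * vs ^ 2 + (1 / 2) * g * h ^ 2] :=
  flux_transformation_general A hA g h u v
end
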